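/- arXiv:2005.03146 — 3 statements merged into one kernel-verified Lean document; each statement's English description precedes it below -/
import Mathlib

section
/- Let n ≥ 2 be an integer and let p > 1 be a real number. For every function f : V(K_n) → ℝ one has Var_p(M_{K_n} f) ≤ (1 − 1/n) · Var_p f. Moreover, equality holds for the delta function f = δ_{a_2} (which satisfies Var_p δ_{a_2} > 0), so the best constant C_{K_n,p} := sup{ Var_p(M_{K_n} f)/Var_p f : f : V → ℝ, Var_p f > 0 } equals 1 − 1/n. -/
open scoped Classical

/-- The ball of radius `r` around `e` in the graph metric of `G`
(only vertices reachable from `e` are at finite distance). -/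
noncomputable def gball {V : Type*} [Fintype V] (G : SimpleGraph V) (e : V) (r : ℕ) :
    Finset V :=
  Finset.univ.filter fun m => G.Reachable e m ∧ G.dist e m ≤ r

/-- The centered Hardy–Littlewood maximal function on a finite graph. -/
noncomputable def mxHL {V : Type*} [Fintype V] (G : SimpleGraph V) (f : V → ℝ) (e : V) : ℝ :=
  ⨆ r : ℕ, (1 / ((gball G e r).card : ℝ)) * ∑ m ∈ gball G e r, |f m|

/-- The fractional centered Hardy–Littlewood maximal function on a finite graph. -/
noncomputable def mxFr {V : Type*} [Fintype V] (G : SimpleGraph V) (α : ℝ) (f : V → ℝ)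
    (e : V) : ℝ :=
  ⨆ r : ℕ, ((gball G e r).card : ℝ) ^ (α - 1) * ∑ m ∈ gball G e r, |f m|

/-- The `p`-variation of `f : V → ℝ` with respect to the graph `G`
(vertices at distance `1` are exactly the adjacent ones). -/
noncomputable def vp {V : Type*} [Fintype V] (G : SimpleGraph V) (p : ℝ) (f : V → ℝ) : ℝ :=
  ((1 / 2) * ∑ v : V, ∑ w : V, if G.Adj v w then |f v - f w| ^ p else 0) ^ (1 / p)

/-- The star graph on `Fin n`, with center the vertex with value `0`. -/
def starG (n : ℕ) : SimpleGraph (Fin n) where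
  Adj v w := v ≠ w ∧ (v.val = 0 ∨ w.val = 0)
  symm := ⟨fun _ _ h => ⟨h.1.symm, h.2.symm⟩⟩
  loopless := ⟨fun _ h => h.1 rfl⟩

/-- The `ℓ²` norm of a function on a finite vertex set. -/
noncomputable def nrm2 {V : Type*} [Fintype V] (g : V → ℝ) : ℝ :=
  Real.sqrt (∑ v : V, g v ^ 2)

/-!
On `K_n` the maximal function of `f` is `max g (mean g)` with `g = |f|`. Ordering each pair of
vertices so that `g` decreases, the jumps of `M f` below a vertex `v` are at most
`(g v - mean g)⁺`, while `n (g v - mean g)` is at most the total drop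
`∑_{g w < g v} (g v - g w)`; the power-mean inequality over the at most `n - 1` vertices below
`v` then yields the factor `(1 - 1/n)^p`. For `δ_a` one has `M δ_a = δ_a + (1 - δ_a) / n`, so
every difference shrinks by exactly `1 - 1/n`.
-/

open Finset

section

variable {V : Type*} [Fintype V]

noncomputable def mean (g : V → ℝ) : ℝ :=
  (∑ u, g u) / Fintype.card V

lemma gball_top_zero (e : V) : gball (⊤ : SimpleGraph V) e 0 = {e} := by
  ext m
  simp only [gball, mem_filter, mem_univ, true_and, mem_singleton, Nat.le_zero]
  constructor
  · rintro ⟨hr, hd⟩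
    exact (hr.dist_eq_zero_iff.mp hd).symm
  · rintro rfl
    exact ⟨.refl _, SimpleGraph.dist_self⟩

lemma gball_top_of_pos (e : V) {r : ℕ} (hr : 0 < r) : gball (⊤ : SimpleGraph V) e r = univ := by
  ext m
  simp only [gball, mem_filter, mem_univ, true_and, iff_true]
  by_cases h : e = m
  · subst h
    simp
  · exact ⟨(SimpleGraph.top_adj e m |>.mpr h).reachable, SimpleGraph.dist_top_of_ne h ▸ hr⟩

lemma mxHL_top (f : V → ℝ) (e : V) :
    mxHL (⊤ : SimpleGraph V) f e = max |f e| (mean fun v => |f v|) := by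
  have hval : ∀ r : ℕ, (1 / ((gball (⊤ : SimpleGraph V) e r).card : ℝ)) *
      ∑ m ∈ gball ⊤ e r, |f m| = if r = 0 then |f e| else mean fun v => |f v| := by
    rintro (_ | r)
    · simp [gball_top_zero]
    · simp [gball_top_of_pos e r.succ_pos, mean, inv_mul_eq_div]
  have hle : ∀ r : ℕ, (if r = 0 then |f e| else mean fun v => |f v|) ≤
      max |f e| (mean fun v => |f v|) := fun r => by
    split_ifs
    exacts [le_max_left _ _, le_max_right _ _]
  have hbdd : BddAbove (Set.range fun r : ℕ => if r = 0 then |f e| else mean fun v => |f v|) :=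
    ⟨_, Set.forall_mem_range.mpr hle⟩
  simp_rw [mxHL, hval]
  exact le_antisymm (ciSup_le hle)
    (max_le (le_ciSup_of_le hbdd 0 le_rfl) (le_ciSup_of_le hbdd 1 le_rfl))

lemma mxHL_top_ite_one_zero [DecidableEq V] (a : V) :
    mxHL ⊤ (fun v => if v = a then (1 : ℝ) else 0) =
      fun v => if v = a then 1 else 1 / (Fintype.card V : ℝ) := by
  have hmean : (mean fun v => |if v = a then (1 : ℝ) else 0|) = 1 / Fintype.card V := by
    simp [mean, apply_ite]
  ext v
  rw [mxHL_top, hmean]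
  split_ifs
  · simpa using Nat.cast_inv_le_one (Fintype.card V)
  · simp

noncomputable def varSum (G : SimpleGraph V) (p : ℝ) (f : V → ℝ) : ℝ :=
  ∑ v, ∑ w, if G.Adj v w then |f v - f w| ^ p else 0

lemma varSum_nonneg (G : SimpleGraph V) (p : ℝ) (f : V → ℝ) : 0 ≤ varSum G p f :=
  sum_nonneg fun _ _ => sum_nonneg fun _ _ => by
    split_ifs
    exacts [Real.rpow_nonneg (abs_nonneg _) p, le_rfl]

lemma vp_le_mul_vp_of_varSum_le {G : SimpleGraph V} {p c : ℝ} (hp : 0 < p) (hc : 0 ≤ c)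
    {f g : V → ℝ} (h : varSum G p g ≤ c ^ p * varSum G p f) :
    vp G p g ≤ c * vp G p f := by
  change (1 / 2 * varSum G p g) ^ (1 / p) ≤ c * (1 / 2 * varSum G p f) ^ (1 / p)
  have hf := varSum_nonneg G p f
  have hg := varSum_nonneg G p g
  calc (1 / 2 * varSum G p g) ^ (1 / p)
      ≤ (c ^ p * (1 / 2 * varSum G p f)) ^ (1 / p) :=
        Real.rpow_le_rpow (by positivity) (by linarith) (by positivity)
    _ = c * (1 / 2 * varSum G p f) ^ (1 / p) := by
        rw [Real.mul_rpow (by positivity) (by positivity), one_div p,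
          Real.rpow_rpow_inv hc hp.ne']

lemma varSum_top {p : ℝ} (hp : p ≠ 0) (f : V → ℝ) :
    varSum ⊤ p f = ∑ v, ∑ w, |f v - f w| ^ p := by
  refine sum_congr rfl fun v _ => sum_congr rfl fun w _ => ?_
  by_cases h : v = w
  · simp [h, Real.zero_rpow hp]
  · simp [h]

lemma varSum_abs_le {G : SimpleGraph V} {p : ℝ} (hp : 0 ≤ p) (f : V → ℝ) :
    varSum G p (fun v => |f v|) ≤ varSum G p f :=
  sum_le_sum fun _ _ => sum_le_sum fun _ _ => by
    split_ifs
    exacts [Real.rpow_le_rpow (abs_nonneg _) (abs_abs_sub_abs_le_abs_sub _ _) hp, le_rfl]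

lemma sum_sum_eq_two_mul_sum_sum_lt (g : V → ℝ) (F : V → V → ℝ)
    (hsymm : ∀ v w, F v w = F w v) (hdiag : ∀ v w, g v = g w → F v w = 0) :
    ∑ v, ∑ w, F v w = 2 * ∑ v, ∑ w ∈ univ.filter (fun w => g w < g v), F v w := by
  have hsplit : ∀ v w, F v w =
      (if g w < g v then F v w else 0) + (if g v < g w then F v w else 0) := by
    intro v w
    rcases lt_trichotomy (g v) (g w) with h | h | h
    · simp [h, h.not_gt]
    · simp [h, hdiag v w h]
    · simp [h, h.not_gt]
  simp_rw [sum_filter, two_mul]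
  conv_lhs => enter [2, v, 2, w]; rw [hsplit v w]
  simp_rw [sum_add_distrib]
  rw [sum_comm (f := fun v w => if g v < g w then F v w else 0)]
  simp_rw [hsymm]

lemma card_mul_sub_mean_le (g : V → ℝ) (v : V) :
    (Fintype.card V : ℝ) * (g v - mean g) ≤
      ∑ w ∈ univ.filter (fun w => g w < g v), (g v - g w) := by
  have : Nonempty V := ⟨v⟩
  have hV : (Fintype.card V : ℝ) ≠ 0 := Nat.cast_ne_zero.mpr Fintype.card_ne_zero
  calc (Fintype.card V : ℝ) * (g v - mean g) = ∑ w, (g v - g w) := by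
        rw [sum_sub_distrib, sum_const, card_univ, nsmul_eq_mul, mean]
        field_simp
    _ ≤ ∑ w, if g w < g v then g v - g w else 0 := by
        gcongr with w
        split_ifs with h
        · exact le_rfl
        · linarith [not_lt.mp h]
    _ = _ := sum_filter _ _ |>.symm

lemma card_filter_lt_add_one_le (g : V → ℝ) (v : V) :
    (#(univ.filter fun w => g w < g v) : ℝ) + 1 ≤ Fintype.card V := by
  have : #(univ.filter fun w => g w < g v) < Fintype.card V :=
    card_lt_card (filter_ssubset.mpr ⟨v, mem_univ v, lt_irrefl _⟩)
  exact_mod_cast this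

lemma sum_lt_abs_max_mean_sub_le {p : ℝ} (hp : 1 ≤ p) (g : V → ℝ) (v : V) :
    ∑ w ∈ univ.filter (fun w => g w < g v), |max (g v) (mean g) - max (g w) (mean g)| ^ p ≤
      (1 - 1 / (Fintype.card V : ℝ)) ^ p *
        ∑ w ∈ univ.filter (fun w => g w < g v), |g v - g w| ^ p := by
  set s := univ.filter fun w => g w < g v
  set n : ℝ := (Fintype.card V : ℝ)
  have : Nonempty V := ⟨v⟩
  have hn : 0 < n := Nat.cast_pos.mpr Fintype.card_pos
  have hs : (#s : ℝ) + 1 ≤ n := card_filter_lt_add_one_le g v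
  have hdrop : ∀ w ∈ s, 0 < g v - g w := fun w hw => sub_pos.mpr (mem_filter.mp hw).2
  have hc : 0 ≤ 1 - 1 / n := Nat.one_sub_one_div_cast_nonneg _
  rcases le_or_gt (g v) (mean g) with hle | hlt
  · refine le_of_eq_of_le (sum_eq_zero fun w hw => ?_) (by positivity)
    have hw := (hdrop w hw).le
    rw [max_eq_right hle, max_eq_right (by linarith), sub_self, abs_zero,
      Real.zero_rpow (by linarith)]
  have hterm : ∀ w ∈ s,
      |max (g v) (mean g) - max (g w) (mean g)| ^ p ≤ (g v - mean g) ^ p := by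
    intro w hw
    have hmax : max (g w) (mean g) ≤ g v := max_le (mem_filter.mp hw).2.le hlt.le
    rw [max_eq_left hlt.le, abs_of_nonneg (sub_nonneg.mpr hmax)]
    exact Real.rpow_le_rpow (sub_nonneg.mpr hmax) (sub_le_sub_left (le_max_right _ _) _)
      (by linarith)
  set k : ℝ := (#s : ℝ)
  have hmean : n * (g v - mean g) ≤ ∑ w ∈ s, (g v - g w) := card_mul_sub_mean_le g v
  have hpowmean : (∑ w ∈ s, (g v - g w)) ^ p ≤ k ^ (p - 1) * ∑ w ∈ s, (g v - g w) ^ p :=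
    Real.rpow_sum_le_const_mul_sum_rpow_of_nonneg s hp fun w hw => (hdrop w hw).le
  have hRHS : 0 ≤ ∑ w ∈ s, (g v - g w) ^ p :=
    sum_nonneg fun w hw => Real.rpow_nonneg (hdrop w hw).le p
  have habs : ∑ w ∈ s, |g v - g w| ^ p = ∑ w ∈ s, (g v - g w) ^ p :=
    sum_congr rfl fun w hw => by rw [abs_of_pos (hdrop w hw)]
  rw [habs]
  refine le_of_mul_le_mul_left ?_ (Real.rpow_pos_of_pos hn p)
  calc n ^ p * ∑ w ∈ s, |max (g v) (mean g) - max (g w) (mean g)| ^ p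
      ≤ n ^ p * (k * (g v - mean g) ^ p) := by
        gcongr
        simpa using sum_le_card_nsmul s _ _ hterm
    _ = k * (n * (g v - mean g)) ^ p := by
        rw [Real.mul_rpow hn.le (sub_nonneg.mpr hlt.le)]
        ring
    _ ≤ k * (∑ w ∈ s, (g v - g w)) ^ p := by gcongr
    _ ≤ k * (k ^ (p - 1) * ∑ w ∈ s, (g v - g w) ^ p) := by gcongr
    _ = k ^ p * ∑ w ∈ s, (g v - g w) ^ p := by
        rw [← mul_assoc, ← Real.rpow_one_add' (by positivity) (by linarith), add_sub_cancel]
    _ ≤ (n - 1) ^ p * ∑ w ∈ s, (g v - g w) ^ p := by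
        gcongr
        linarith
    _ = n ^ p * ((1 - 1 / n) ^ p * ∑ w ∈ s, (g v - g w) ^ p) := by
        rw [← mul_assoc, ← Real.mul_rpow hn.le hc, mul_one_sub, mul_one_div_cancel hn.ne']

lemma varSum_top_mxHL_le {p : ℝ} (hp : 1 ≤ p) (f : V → ℝ) :
    varSum ⊤ p (mxHL ⊤ f) ≤ (1 - 1 / (Fintype.card V : ℝ)) ^ p * varSum ⊤ p f := by
  have hp0 : p ≠ 0 := by positivity
  have hc := Nat.one_sub_one_div_cast_nonneg (α := ℝ) (Fintype.card V)
  set g : V → ℝ := fun v => |f v|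
  have hsplit : ∀ φ : ℝ → ℝ, ∑ v, ∑ w, |φ (g v) - φ (g w)| ^ p =
      2 * ∑ v, ∑ w ∈ univ.filter (fun w => g w < g v), |φ (g v) - φ (g w)| ^ p := fun φ =>
    sum_sum_eq_two_mul_sum_sum_lt g _ (fun v w => by rw [abs_sub_comm])
      (fun v w h => by rw [h, sub_self, abs_zero, Real.zero_rpow hp0])
  calc varSum ⊤ p (mxHL ⊤ f)
      = 2 * ∑ v, ∑ w ∈ univ.filter (fun w => g w < g v),
          |max (g v) (mean g) - max (g w) (mean g)| ^ p := by
        rw [funext (mxHL_top f), varSum_top hp0]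
        exact hsplit fun x => max x (mean g)
    _ ≤ 2 * ∑ v, (1 - 1 / (Fintype.card V : ℝ)) ^ p *
          ∑ w ∈ univ.filter (fun w => g w < g v), |g v - g w| ^ p := by
        gcongr with v
        exact sum_lt_abs_max_mean_sub_le hp g v
    _ = (1 - 1 / (Fintype.card V : ℝ)) ^ p * varSum ⊤ p g := by
        rw [varSum_top hp0, hsplit fun x => x, ← mul_sum]
        ring
    _ ≤ (1 - 1 / (Fintype.card V : ℝ)) ^ p * varSum ⊤ p f := by
        gcongr
        exact varSum_abs_le (by positivity) f

theorem vp_top_mxHL_le {p : ℝ} (hp : 1 ≤ p) (f : V → ℝ) :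
    vp ⊤ p (mxHL ⊤ f) ≤ (1 - 1 / (Fintype.card V : ℝ)) * vp ⊤ p f :=
  vp_le_mul_vp_of_varSum_le (by positivity)
    (Nat.one_sub_one_div_cast_nonneg _)
    (varSum_top_mxHL_le hp f)

lemma varSum_top_ite [DecidableEq V] {p : ℝ} (hp : p ≠ 0) (a : V) (b d : ℝ) :
    varSum ⊤ p (fun v => if v = a then b else d) =
      2 * ((Fintype.card V : ℝ) - 1) * |b - d| ^ p := by
  have : Nonempty V := ⟨a⟩
  set h : V → ℝ := fun v => if v = a then b else d
  have ha : h a = b := if_pos rfl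
  have hna : ∀ x ∈ ({a}ᶜ : Finset V), h x = d := fun x hx => if_neg (by simpa using hx)
  have hcompl : (#({a}ᶜ : Finset V) : ℝ) = Fintype.card V - 1 := by
    rw [card_compl, card_singleton, Nat.cast_sub Fintype.card_pos, Nat.cast_one]
  have hrow : ∀ x, ∑ w, |h x - h w| ^ p =
      |h x - b| ^ p + ((Fintype.card V : ℝ) - 1) * |h x - d| ^ p := fun x => by
    rw [Fintype.sum_eq_add_sum_compl a, sum_congr rfl fun w hw => by rw [hna w hw], sum_const,
      nsmul_eq_mul, hcompl, ha]
  rw [varSum_top hp, sum_congr rfl fun x _ => hrow x, Fintype.sum_eq_add_sum_compl a,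
    sum_congr rfl fun x hx => by rw [hna x hx], sum_const, nsmul_eq_mul, hcompl, ha]
  simp only [sub_self, abs_zero, Real.zero_rpow hp, abs_sub_comm d b]
  ring

lemma vp_top_ite [DecidableEq V] {p : ℝ} (hp : 0 < p) (a : V) (b d : ℝ) :
    vp ⊤ p (fun v => if v = a then b else d) =
      ((Fintype.card V : ℝ) - 1) ^ (1 / p) * |b - d| := by
  have hV : (1 : ℝ) ≤ Fintype.card V := Nat.one_le_cast.mpr (Fintype.card_pos_iff.mpr ⟨a⟩)
  change (1 / 2 * varSum ⊤ p _) ^ (1 / p) = _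
  rw [varSum_top_ite hp.ne', show ∀ x y : ℝ, 1 / 2 * (2 * x * y) = x * y by intros; ring,
    Real.mul_rpow (by linarith) (by positivity), one_div p,
    Real.rpow_rpow_inv (abs_nonneg _) hp.ne']

end

/-- sharp bound for the `p`-variation of the Hardy–Littlewood maximal
operator on the complete graph `K_n`, for `p > 1`. -/
theorem completeGraph_var_sharp_p_gt_one (n : ℕ) (hn : 2 ≤ n) (p : ℝ) (hp : 1 < p) :
    (∀ f : Fin n → ℝ,
        vp (⊤ : SimpleGraph (Fin n)) p (mxHL ⊤ f) ≤ (1 - 1 / (n : ℝ)) * vp ⊤ p f) ∧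
    (0 < vp (⊤ : SimpleGraph (Fin n)) p
          (fun v => if v = ⟨1, by omega⟩ then (1 : ℝ) else 0) ∧
      vp (⊤ : SimpleGraph (Fin n)) p
          (mxHL ⊤ (fun v => if v = ⟨1, by omega⟩ then (1 : ℝ) else 0)) =
        (1 - 1 / (n : ℝ)) *
          vp (⊤ : SimpleGraph (Fin n)) p
            (fun v => if v = ⟨1, by omega⟩ then (1 : ℝ) else 0)) ∧
    sSup {c : ℝ | ∃ f : Fin n → ℝ, 0 < vp (⊤ : SimpleGraph (Fin n)) p f ∧
        c = vp ⊤ p (mxHL ⊤ f) / vp ⊤ p f} = 1 - 1 / (n : ℝ) := by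
  have hp0 : 0 < p := by linarith
  set δ : Fin n → ℝ := fun v => if v = ⟨1, by omega⟩ then 1 else 0
  have hδ : vp ⊤ p δ = ((n : ℝ) - 1) ^ (1 / p) := by simp [δ, vp_top_ite hp0]
  have hδ_pos : 0 < vp ⊤ p δ := by
    have : (2 : ℝ) ≤ n := by exact_mod_cast hn
    rw [hδ]
    exact Real.rpow_pos_of_pos (by linarith) _
  have hMδ : vp ⊤ p (mxHL ⊤ δ) = (1 - 1 / (n : ℝ)) * vp ⊤ p δ := by
    rw [mxHL_top_ite_one_zero, vp_top_ite hp0, hδ, Fintype.card_fin,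
      abs_of_nonneg (Nat.one_sub_one_div_cast_nonneg n), mul_comm]
  have hbound :
      ∀ f : Fin n → ℝ, vp ⊤ p (mxHL ⊤ f) ≤ (1 - 1 / (n : ℝ)) * vp ⊤ p f := by
    simpa using vp_top_mxHL_le (V := Fin n) hp.le
  refine ⟨hbound, ⟨hδ_pos, hMδ⟩, IsGreatest.csSup_eq ⟨⟨δ, hδ_pos, ?_⟩, ?_⟩⟩
  · rw [hMδ, mul_div_cancel_right₀ _ hδ_pos.ne']
  · rintro _ ⟨f, hf, rfl⟩
    exact div_le_of_le_mul₀ hf.le (Nat.one_sub_one_div_cast_nonneg n) (hbound f)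
end

section
/- Let 1 < p < ∞, let p' = p/(p−1), and set c := (1 + 2^{p'})^{1/p'} / 3 = (1 + 2^{p/(p−1)})^{(p−1)/p} / 3. Then: (a) for every function f : V(S_3) → ℝ one has Var_p(M_{S_3} f) ≤ c · Var_p f; (b) the function f defined by f(a_1) = 3, f(a_2) = 3 + 2^{1/(p−1)}, f(a_3) = 2 satisfies Var_p(M_{S_3} f) = c · Var_p f with Var_p f > 0; (c) c < 1. In particular, the best constant C_{S_3,p} := sup{ Var_p(M_{S_3} f)/Var_p f : Var_p f > 0 } equals (1 + 2^{p/(p−1)})^{(p−1)/p} / 3 and is strictly less than 1. -/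
open scoped Classical

/-!
On `S_3` the maximal function is explicit: at the centre it is `max (|f 0|, m)` and at a leaf `i`
it is `max (|f i|, (|f 0| + |f i|) / 2, m)`, where `m` is the mean of `|f|`. Let `a, b` be the
edge differences of `|f|` and `u, v` those of `M f`. Going through the orderings of
`|f 0|, |f 1|, |f 2|`, either `u ≤ a / 2` and `v ≤ b / 2`, or `u + v ≤ (2a + b) / 3` up to
swapping the leaves. The first case costs the factor `1 / 2 ≤ c`. In the second,
`‖(u, v)‖_p ≤ u + v`, and Hölder's inequality against the weights `(2/3, 1/3)`, whose `ℓ^{p'}`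
norm is `c`, bounds `(2a + b) / 3` by `c ‖(a, b)‖_p`. Both inequalities are equalities when
`v = 0` and `(a, b) = (t, 1)` with `t ^ (p - 1) = 2`, as for `f = (3, 3 + t, 2)`. Finally
`c < 1` because `1 + 2 ^ p' < 3 ^ p'`.
-/

section GraphBall

variable {V : Type*} [Fintype V] (G : SimpleGraph V)

lemma mem_gball_iff {e m : V} {r : ℕ} : m ∈ gball G e r ↔ G.edist e m ≤ r := by
  simp only [gball, Finset.mem_filter, Finset.mem_univ, true_and]
  constructor
  · rintro ⟨hreach, hdist⟩
    rw [← hreach.coe_dist_eq_edist]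
    exact_mod_cast hdist
  · intro h
    have hreach : G.Reachable e m :=
      SimpleGraph.reachable_of_edist_ne_top (ne_top_of_le_ne_top (ENat.natCast_ne_top r) h)
    refine ⟨hreach, ?_⟩
    rw [← hreach.coe_dist_eq_edist] at h
    exact_mod_cast h

lemma gball_zero (e : V) : gball G e 0 = {e} := by
  ext m
  rw [mem_gball_iff, Finset.mem_singleton, Nat.cast_zero, nonpos_iff_eq_zero,
    SimpleGraph.edist_eq_zero_iff, eq_comm]

lemma mem_gball_one {e m : V} : m ∈ gball G e 1 ↔ G.Adj e m ∨ e = m := by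
  rw [mem_gball_iff, Nat.cast_one, SimpleGraph.edist_le_one_iff_adj_or_eq]

lemma gball_mono (e : V) {r s : ℕ} (hrs : r ≤ s) : gball G e r ⊆ gball G e s := fun m hm => by
  rw [mem_gball_iff] at hm ⊢
  exact hm.trans (by exact_mod_cast hrs)

end GraphBall

lemma ciSup_nat_eq_max_of_forall_two_le {A : ℕ → ℝ} (h : ∀ r, 2 ≤ r → A r = A 2) :
    ⨆ r, A r = max (A 0) (max (A 1) (A 2)) := by
  have hle : ∀ r, A r ≤ max (A 0) (max (A 1) (A 2))
    | 0 => le_max_left _ _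
    | 1 => le_max_of_le_right (le_max_left _ _)
    | r + 2 => h (r + 2) (by omega) ▸ le_max_of_le_right (le_max_right _ _)
  have hbdd : BddAbove (Set.range A) := ⟨_, Set.forall_mem_range.2 hle⟩
  exact le_antisymm (ciSup_le hle)
    (max_le (le_ciSup hbdd 0) (max_le (le_ciSup hbdd 1) (le_ciSup hbdd 2)))

section StarGraph

variable {n : ℕ} [NeZero n]

lemma starG_adj_zero {v : Fin n} (hv : v ≠ 0) : (starG n).Adj 0 v :=
  ⟨hv.symm, Or.inl (Fin.val_zero n)⟩

lemma starG_adj_iff_of_ne_zero {v w : Fin n} (hv : v ≠ 0) : (starG n).Adj v w ↔ w = 0 := by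
  refine ⟨fun h => ?_, fun hw => hw ▸ (starG_adj_zero hv).symm⟩
  rcases h.2 with h0 | h0
  · exact absurd (Fin.val_eq_zero_iff.1 h0) hv
  · exact Fin.val_eq_zero_iff.1 h0

lemma gball_starG_zero {r : ℕ} (hr : 1 ≤ r) : gball (starG n) 0 r = Finset.univ := by
  refine Finset.eq_univ_of_forall fun m => gball_mono _ _ hr ?_
  rw [mem_gball_one]
  by_cases hm : m = 0
  · exact Or.inr hm.symm
  · exact Or.inl (starG_adj_zero hm)

lemma gball_starG_one_of_ne_zero {v : Fin n} (hv : v ≠ 0) : gball (starG n) v 1 = {0, v} := by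
  ext m
  rw [mem_gball_one, starG_adj_iff_of_ne_zero hv, Finset.mem_insert, Finset.mem_singleton,
    eq_comm (a := v)]

lemma gball_starG_of_two_le (e : Fin n) {r : ℕ} (hr : 2 ≤ r) :
    gball (starG n) e r = Finset.univ := by
  refine Finset.eq_univ_of_forall fun m => ?_
  have hle (v : Fin n) : (starG n).edist 0 v ≤ 1 := by
    rw [← Nat.cast_one, ← mem_gball_iff, gball_starG_zero le_rfl]
    exact Finset.mem_univ v
  rw [mem_gball_iff]
  calc (starG n).edist e m ≤ (starG n).edist e 0 + (starG n).edist 0 m :=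
        SimpleGraph.edist_triangle
    _ ≤ 1 + 1 := by rw [SimpleGraph.edist_comm]; exact add_le_add (hle e) (hle m)
    _ ≤ r := by exact_mod_cast hr

variable (f : Fin n → ℝ)

lemma mxHL_starG_zero :
    mxHL (starG n) f 0 = max |f 0| ((∑ m, |f m|) / n) := by
  rw [mxHL, ciSup_nat_eq_max_of_forall_two_le fun r hr => by
    rw [gball_starG_of_two_le _ hr, gball_starG_of_two_le _ le_rfl]]
  rw [gball_zero, gball_starG_zero le_rfl, gball_starG_of_two_le _ le_rfl, max_self]
  simp [div_eq_inv_mul]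

lemma mxHL_starG_of_ne_zero {v : Fin n} (hv : v ≠ 0) :
    mxHL (starG n) f v = max |f v| (max ((|f 0| + |f v|) / 2) ((∑ m, |f m|) / n)) := by
  rw [mxHL, ciSup_nat_eq_max_of_forall_two_le fun r hr => by
    rw [gball_starG_of_two_le _ hr, gball_starG_of_two_le _ le_rfl]]
  rw [gball_zero, gball_starG_one_of_ne_zero hv, gball_starG_of_two_le _ le_rfl,
    Finset.sum_pair (Ne.symm hv), Finset.card_pair (Ne.symm hv)]
  simp [div_eq_inv_mul]

end StarGraph

lemma vp_starG_three (p : ℝ) (g : Fin 3 → ℝ) :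
    vp (starG 3) p g = (|g 0 - g 1| ^ p + |g 0 - g 2| ^ p) ^ (1 / p) := by
  have hadj : ∀ v w : Fin 3, (starG 3).Adj v w ↔ v ≠ w ∧ (v = 0 ∨ w = 0) := by
    intro v w; simp [starG, Fin.val_eq_zero_iff]
  simp only [vp, Fin.sum_univ_three, hadj]
  norm_num [Fin.ext_iff]
  rw [abs_sub_comm (g 1), abs_sub_comm (g 2)]
  ring_nf

noncomputable def starThreeConst (p : ℝ) : ℝ :=
  (1 + (2 : ℝ) ^ (p / (p - 1))) ^ ((p - 1) / p) / 3

section StarThreeConst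

variable {p : ℝ}

lemma one_half_le_starThreeConst (hp : 1 < p) : 1 / 2 ≤ starThreeConst p := by
  have hq : 0 < p / (p - 1) := div_pos (by linarith) (by linarith)
  have h : (2 : ℝ) ≤ (1 + 2 ^ (p / (p - 1))) ^ ((p - 1) / p) := by
    rw [← inv_div p (p - 1), Real.le_rpow_inv_iff_of_pos zero_le_two (by positivity) hq]
    linarith
  rw [starThreeConst]
  linarith

lemma starThreeConst_lt_one (hp : 1 < p) : starThreeConst p < 1 := by
  set q := p / (p - 1)
  have hq : 1 < q := (one_lt_div (by linarith)).2 (by linarith)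
  have h3 : (1 : ℝ) < 3 ^ (q - 1) := Real.one_lt_rpow (by norm_num) (by linarith)
  have h23 : (2 : ℝ) ^ (q - 1) < 3 ^ (q - 1) :=
    Real.rpow_lt_rpow (by norm_num) (by norm_num) (by linarith)
  have hsum : 1 + (2 : ℝ) ^ q < 3 ^ q := by
    rw [← sub_add_cancel q 1, Real.rpow_add_one two_ne_zero, Real.rpow_add_one three_ne_zero]
    linarith
  have hlt : (1 + (2 : ℝ) ^ q) ^ ((p - 1) / p) < 3 := by
    rwa [← inv_div p (p - 1),
      Real.rpow_inv_lt_iff_of_pos (by positivity) zero_le_three (by linarith)]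
  rw [starThreeConst]
  linarith

lemma two_mul_add_div_three_le_starThreeConst_mul (hp : 1 < p) {a b : ℝ} (ha : 0 ≤ a)
    (hb : 0 ≤ b) :
    (2 * a + b) / 3 ≤ starThreeConst p * (a ^ p + b ^ p) ^ (1 / p) := by
  have h := Real.inner_le_Lp_mul_Lq_of_nonneg (s := Finset.univ) (f := ![2, 1]) (g := ![a, b])
    (Real.HolderConjugate.conjExponent hp).symm
    (by intro i _; fin_cases i <;> norm_num) (by intro i _; fin_cases i <;> simp [ha, hb])
  simp only [Fin.sum_univ_two, Matrix.cons_val_zero, Matrix.cons_val_one, Real.one_rpow,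
    one_mul, Real.conjExponent, one_div_div] at h
  rw [starThreeConst, add_comm 1]
  linarith

lemma rpow_add_rpow_rpow_le_starThreeConst_mul (hp : 1 < p) {u v a b : ℝ}
    (hu : 0 ≤ u) (hv : 0 ≤ v) (ha : 0 ≤ a) (hb : 0 ≤ b)
    (h : (u ≤ a / 2 ∧ v ≤ b / 2) ∨ u + v ≤ (2 * a + b) / 3 ∨ u + v ≤ (a + 2 * b) / 3) :
    (u ^ p + v ^ p) ^ (1 / p) ≤ starThreeConst p * (a ^ p + b ^ p) ^ (1 / p) := by
  have hp0 : 0 < p := by linarith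
  rcases h with ⟨hua, hvb⟩ | h | h
  · calc (u ^ p + v ^ p) ^ (1 / p) ≤ ((a / 2) ^ p + (b / 2) ^ p) ^ (1 / p) := by gcongr
      _ = 1 / 2 * (a ^ p + b ^ p) ^ (1 / p) := by
        rw [Real.div_rpow ha zero_le_two, Real.div_rpow hb zero_le_two, ← add_div,
          Real.div_rpow (by positivity) (by positivity), ← Real.rpow_mul zero_le_two,
          mul_one_div_cancel hp0.ne', Real.rpow_one, one_div_mul_eq_div]
      _ ≤ starThreeConst p * (a ^ p + b ^ p) ^ (1 / p) := by
        gcongr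
        exact one_half_le_starThreeConst hp
  · calc (u ^ p + v ^ p) ^ (1 / p) ≤ u + v := Real.rpow_add_rpow_le_add hu hv hp.le
      _ ≤ (2 * a + b) / 3 := h
      _ ≤ _ := two_mul_add_div_three_le_starThreeConst_mul hp ha hb
  · calc (u ^ p + v ^ p) ^ (1 / p) ≤ u + v := Real.rpow_add_rpow_le_add hu hv hp.le
      _ ≤ (2 * b + a) / 3 := by linarith
      _ ≤ starThreeConst p * (b ^ p + a ^ p) ^ (1 / p) :=
        two_mul_add_div_three_le_starThreeConst_mul hp hb ha
      _ = _ := by rw [add_comm (b ^ p)]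

end StarThreeConst

lemma starThree_maximal_diff_bound (x y z : ℝ) :
    (|max x ((x + y + z) / 3) - max y (max ((x + y) / 2) ((x + y + z) / 3))| ≤ |x - y| / 2 ∧
        |max x ((x + y + z) / 3) - max z (max ((x + z) / 2) ((x + y + z) / 3))| ≤ |x - z| / 2) ∨
      |max x ((x + y + z) / 3) - max y (max ((x + y) / 2) ((x + y + z) / 3))| +
          |max x ((x + y + z) / 3) - max z (max ((x + z) / 2) ((x + y + z) / 3))| ≤
        (2 * |x - y| + |x - z|) / 3 ∨
      |max x ((x + y + z) / 3) - max y (max ((x + y) / 2) ((x + y + z) / 3))| +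
          |max x ((x + y + z) / 3) - max z (max ((x + z) / 2) ((x + y + z) / 3))| ≤
        (|x - y| + 2 * |x - z|) / 3 := by
  wlog hzy : z ≤ y generalizing y z
  · have h := this z y (le_of_not_ge hzy)
    rw [add_right_comm x z y] at h
    rcases h with ⟨h₁, h₂⟩ | h | h
    · exact Or.inl ⟨h₂, h₁⟩
    · right; right; linarith
    · right; left; linarith
  set S := (x + y + z) / 3 with hS
  rcases le_total y x with hyx | hxy
  · have hm0 : max x S = x := max_eq_left (by linarith)
    have hm1 : max y (max ((x + y) / 2) S) = (x + y) / 2 := by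
      rw [max_eq_left (by linarith : S ≤ (x + y) / 2), max_eq_right (by linarith)]
    have hm2_le : max z (max ((x + z) / 2) S) ≤ x :=
      max_le (by linarith) (max_le (by linarith) (by linarith))
    have hm2_ge : (x + z) / 2 ≤ max z (max ((x + z) / 2) S) ∧ S ≤ max z (max ((x + z) / 2) S) :=
      ⟨le_max_of_le_right (le_max_left _ _), le_max_of_le_right (le_max_right _ _)⟩
    rw [hm0, hm1, abs_of_nonneg (by linarith : 0 ≤ x - (x + y) / 2),
      abs_of_nonneg (sub_nonneg.2 hm2_le), abs_of_nonneg (by linarith : 0 ≤ x - y),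
      abs_of_nonneg (by linarith : 0 ≤ x - z)]
    rcases le_total (2 * (x - y)) (x - z) with h | h
    · right; right; linarith
    · left; constructor <;> linarith
  right; left
  have hm1 : max y (max ((x + y) / 2) S) = y := max_eq_left (max_le (by linarith) (by linarith))
  rw [hm1, abs_sub_comm, abs_of_nonneg (sub_nonneg.2 (max_le hxy (by linarith))),
    abs_sub_comm x y, abs_of_nonneg (by linarith : 0 ≤ y - x)]
  rcases le_total z x with hzx | hxz
  · have hm2 : max z (max ((x + z) / 2) S) = S := by
      rw [max_eq_right (by linarith : (x + z) / 2 ≤ S), max_eq_right (by linarith)]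
    rw [hm2, abs_of_nonneg (sub_nonneg.2 (le_max_right x S)),
      abs_of_nonneg (by linarith : 0 ≤ x - z)]
    linarith [max_le (by linarith : x ≤ y) (by linarith : S ≤ y)]
  · have hm0 : max x S = S := max_eq_right (by linarith)
    rw [hm0, max_eq_right (by linarith : (x + z) / 2 ≤ S), abs_sub_comm,
      abs_of_nonneg (sub_nonneg.2 (le_max_right z S)), abs_sub_comm,
      abs_of_nonneg (by linarith : 0 ≤ z - x)]
    rcases le_total z S with hzS | hSz
    · rw [max_eq_right hzS]; linarith
    · rw [max_eq_left hSz]; linarith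

lemma vp_mxHL_starG_three_le {p : ℝ} (hp : 1 < p) (f : Fin 3 → ℝ) :
    vp (starG 3) p (mxHL (starG 3) f) ≤ starThreeConst p * vp (starG 3) p f := by
  rw [vp_starG_three, vp_starG_three, mxHL_starG_zero,
    mxHL_starG_of_ne_zero f (by decide : (1 : Fin 3) ≠ 0),
    mxHL_starG_of_ne_zero f (by decide : (2 : Fin 3) ≠ 0), Fin.sum_univ_three, Nat.cast_ofNat]
  calc _ ≤ starThreeConst p * (|(|f 0| - |f 1|)| ^ p + |(|f 0| - |f 2|)| ^ p) ^ (1 / p) :=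
        rpow_add_rpow_rpow_le_starThreeConst_mul hp (abs_nonneg _) (abs_nonneg _) (abs_nonneg _)
          (abs_nonneg _) (starThree_maximal_diff_bound _ _ _)
    _ ≤ starThreeConst p * (|f 0 - f 1| ^ p + |f 0 - f 2| ^ p) ^ (1 / p) := by
        have hc : 0 ≤ starThreeConst p := by linarith [one_half_le_starThreeConst hp]
        have h₁ := abs_abs_sub_abs_le_abs_sub (f 0) (f 1)
        have h₂ := abs_abs_sub_abs_le_abs_sub (f 0) (f 2)
        gcongr

noncomputable def starThreeExtremal (t : ℝ) : Fin 3 → ℝ :=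
  fun v => if v = 0 then 3 else if v = 1 then 3 + t else 2

lemma vp_starThreeExtremal (p : ℝ) {t : ℝ} (ht : 0 ≤ t) :
    vp (starG 3) p (starThreeExtremal t) = (t ^ p + 1) ^ (1 / p) := by
  rw [vp_starG_three]
  norm_num [starThreeExtremal, Fin.ext_iff, abs_of_nonneg ht]

lemma vp_mxHL_starThreeExtremal {p t : ℝ} (hp : 0 < p) (ht : 1 ≤ t) :
    vp (starG 3) p (mxHL (starG 3) (starThreeExtremal t)) = (2 * t + 1) / 3 := by
  have e0 : |starThreeExtremal t 0| = 3 := by norm_num [starThreeExtremal]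
  have e1 : |starThreeExtremal t 1| = 3 + t := by
    norm_num [starThreeExtremal, Fin.ext_iff, abs_of_nonneg (by linarith : 0 ≤ 3 + t)]
  have e2 : |starThreeExtremal t 2| = 2 := by norm_num [starThreeExtremal, Fin.ext_iff]
  have h0 : mxHL (starG 3) (starThreeExtremal t) 0 = (8 + t) / 3 := by
    rw [mxHL_starG_zero, Fin.sum_univ_three, e0, e1, e2, Nat.cast_ofNat,
      max_eq_right (by linarith)]
    ring
  have h1 : mxHL (starG 3) (starThreeExtremal t) 1 = 3 + t := by
    rw [mxHL_starG_of_ne_zero _ (by decide : (1 : Fin 3) ≠ 0), Fin.sum_univ_three, e0, e1, e2,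
      Nat.cast_ofNat, max_eq_left (max_le (by linarith) (by linarith))]
  have h2 : mxHL (starG 3) (starThreeExtremal t) 2 = (8 + t) / 3 := by
    rw [mxHL_starG_of_ne_zero _ (by decide : (2 : Fin 3) ≠ 0), Fin.sum_univ_three, e0, e1, e2,
      Nat.cast_ofNat, max_eq_right (by linarith : (3 + 2 : ℝ) / 2 ≤ (3 + (3 + t) + 2) / 3),
      max_eq_right (by linarith)]
    ring
  rw [vp_starG_three, h0, h1, h2, sub_self, abs_zero, Real.zero_rpow hp.ne', add_zero,
    abs_of_nonpos (by linarith), ← Real.rpow_mul (by linarith), mul_one_div_cancel hp.ne',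
    Real.rpow_one]
  ring

lemma vp_mxHL_starThreeExtremal_two_rpow {p : ℝ} (hp : 1 < p) :
    vp (starG 3) p (mxHL (starG 3) (starThreeExtremal (2 ^ (1 / (p - 1))))) =
      starThreeConst p * vp (starG 3) p (starThreeExtremal (2 ^ (1 / (p - 1)))) := by
  set t : ℝ := 2 ^ (1 / (p - 1))
  have ht : 1 ≤ t := Real.one_le_rpow one_le_two (by have := sub_pos.2 hp; positivity)
  have htp : t ^ p = 2 ^ (p / (p - 1)) := by
    rw [← Real.rpow_mul zero_le_two, one_div_mul_eq_div]
  have h2t : 2 * t = 2 ^ (p / (p - 1)) := by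
    have hq : p / (p - 1) = 1 + 1 / (p - 1) := by
      field_simp [(sub_pos.2 hp).ne']
      ring
    rw [hq, Real.rpow_add two_pos, Real.rpow_one]
  rw [vp_starThreeExtremal p (by linarith), vp_mxHL_starThreeExtremal (by linarith) ht, htp, h2t,
    starThreeConst, add_comm _ 1, div_mul_eq_mul_div, ← Real.rpow_add (by positivity),
    ← add_div, sub_add_cancel, div_self (by linarith), Real.rpow_one]

lemma csSup_div_eq_of_forall_le_of_eq {α : Type*} {A N : α → ℝ} {c : ℝ}
    (hle : ∀ f, 0 < N f → A f ≤ c * N f) {f₀ : α} (hf₀ : 0 < N f₀) (heq : A f₀ = c * N f₀) :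
    sSup {t : ℝ | ∃ f, 0 < N f ∧ t = A f / N f} = c :=
  IsGreatest.csSup_eq ⟨⟨f₀, hf₀, by rw [heq, mul_div_cancel_right₀ _ hf₀.ne']⟩,
    by rintro t ⟨f, hf, rfl⟩; exact (div_le_iff₀ hf).2 (hle f hf)⟩

/-- the sharp constant for the `p`-variation of the Hardy–Littlewood maximal
operator on the star graph `S_3`, for `1 < p`, is `(1 + 2^(p/(p-1)))^((p-1)/p) / 3 < 1`. -/
theorem starGraphThree_var_sharp_p_gt_one (p : ℝ) (hp : 1 < p) (c : ℝ)
    (hc : c = (1 + (2 : ℝ) ^ (p / (p - 1))) ^ ((p - 1) / p) / 3) :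
    (∀ f : Fin 3 → ℝ, vp (starG 3) p (mxHL (starG 3) f) ≤ c * vp (starG 3) p f) ∧
    (0 < vp (starG 3) p
          (fun v => if v = 0 then (3 : ℝ) else
            if v = 1 then 3 + (2 : ℝ) ^ (1 / (p - 1)) else 2) ∧
      vp (starG 3) p
          (mxHL (starG 3)
            (fun v => if v = 0 then (3 : ℝ) else
              if v = 1 then 3 + (2 : ℝ) ^ (1 / (p - 1)) else 2)) =
        c * vp (starG 3) p
          (fun v => if v = 0 then (3 : ℝ) else
            if v = 1 then 3 + (2 : ℝ) ^ (1 / (p - 1)) else 2)) ∧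
    c < 1 ∧
    sSup {t : ℝ | ∃ f : Fin 3 → ℝ, 0 < vp (starG 3) p f ∧
        t = vp (starG 3) p (mxHL (starG 3) f) / vp (starG 3) p f} = c := by
  obtain rfl : c = starThreeConst p := hc
  have hpos : 0 < vp (starG 3) p (starThreeExtremal (2 ^ (1 / (p - 1)))) := by
    rw [vp_starThreeExtremal p (by positivity)]
    positivity
  have heq := vp_mxHL_starThreeExtremal_two_rpow hp
  exact ⟨vp_mxHL_starG_three_le hp, ⟨hpos, heq⟩, starThreeConst_lt_one hp,
    csSup_div_eq_of_forall_le_of_eq (fun f _ => vp_mxHL_starG_three_le hp f) hpos heq⟩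
end

section
/- Let G = (V,E) be a connected finite simple graph with n vertices, fix a vertex a_0 ∈ V, let 0 ≤ α < 1 and 0 < p < ∞, and define ‖f‖_{BV_p(G)} := Var_p f + |f(a_0)|. Then: (a) there exists a constant C = C(n,p,α) such that ‖M_{α,G} f‖_{BV_p(G)} ≤ C ‖f‖_{BV_p(G)} for every f : V → ℝ (for instance one may take the bound Var_p(M_{α,G} f) + |M_{α,G} f(a_0)| ≤ C(‖f‖_{BV_p(G)})); (b) if (f_j) is a sequence of functions with ‖f_j − f‖_{BV_p(G)} → 0 as j → ∞, then ‖M_{α,G} f_j − M_{α,G} f‖_{BV_p(G)} → 0 as j → ∞. -/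
open scoped Classical

/-! On a connected graph with `n` vertices every value `f v` differs from `f a0` by at most
`n · Var_p f`, so the norm `Var_p f + |f a0|` dominates `‖f‖_∞` and hence `‖f‖_1` up to factors
of `n`; conversely `Var_p h ≤ (n²)^(1/p) · 2‖h‖_∞`. Since `α < 1` and balls are nonempty, every
average in `M_α f` has coefficient at most `1`, so `|M_α f - M_α g| ≤ ‖f - g‖_1` pointwise.
Chaining these gives `‖M_α f - M_α g‖ ≤ C ‖f - g‖`, which yields both boundedness (`g = 0`)
and continuity. -/

noncomputable def bvNorm {V : Type*} [Fintype V] (G : SimpleGraph V) (p : ℝ) (a0 : V)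
    (f : V → ℝ) : ℝ :=
  vp G p f + |f a0|

namespace SimpleGraph

variable {V : Type*} [Fintype V] (G : SimpleGraph V)

lemma sum_vp_summand_nonneg (p : ℝ) (f : V → ℝ) :
    0 ≤ ∑ v, ∑ w, if G.Adj v w then |f v - f w| ^ p else 0 :=
  Finset.sum_nonneg fun _ _ => Finset.sum_nonneg fun _ _ => by split_ifs <;> positivity

lemma vp_nonneg (p : ℝ) (f : V → ℝ) : 0 ≤ vp G p f :=
  Real.rpow_nonneg (mul_nonneg (by norm_num) (G.sum_vp_summand_nonneg p f)) _

lemma bvNorm_nonneg (p : ℝ) (a0 : V) (f : V → ℝ) : 0 ≤ bvNorm G p a0 f :=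
  add_nonneg (G.vp_nonneg p f) (abs_nonneg _)

lemma abs_sub_le_vp_of_adj {p : ℝ} (hp : 0 < p) (f : V → ℝ) {v w : V} (h : G.Adj v w) :
    |f v - f w| ≤ vp G p f := by
  set F : V → V → ℝ := fun a b => if G.Adj a b then |f a - f b| ^ p else 0
  have hF : ∀ a b, 0 ≤ F a b := fun a b => by simp only [F]; split_ifs <;> positivity
  have hsum : 2 * |f v - f w| ^ p ≤ ∑ a, ∑ b, F a b :=
    calc 2 * |f v - f w| ^ p = F v w + F w v := by
          simp only [F, h, h.symm, if_true, abs_sub_comm (f w)]; ring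
      _ ≤ ∑ b, F v b + ∑ b, F w b :=
          add_le_add (Finset.single_le_sum (fun b _ => hF v b) (Finset.mem_univ w))
            (Finset.single_le_sum (fun b _ => hF w b) (Finset.mem_univ v))
      _ ≤ ∑ a, ∑ b, F a b :=
          Finset.add_le_sum (fun a _ => Finset.sum_nonneg fun b _ => hF a b)
            (Finset.mem_univ v) (Finset.mem_univ w) h.ne
  calc |f v - f w| = (|f v - f w| ^ p) ^ (1 / p) := by
        rw [one_div, Real.rpow_rpow_inv (abs_nonneg _) hp.ne']
    _ ≤ vp G p f :=
        Real.rpow_le_rpow (by positivity) (by simp only [F] at hsum; linarith) (by positivity)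

lemma abs_sub_le_length_mul_vp {p : ℝ} (hp : 0 < p) (f : V → ℝ) {u v : V} (w : G.Walk u v) :
    |f v - f u| ≤ w.length * vp G p f := by
  induction w with
  | nil => simp
  | @cons a b c h q ih =>
    have hab : |f b - f a| ≤ vp G p f := abs_sub_comm (f a) (f b) ▸ G.abs_sub_le_vp_of_adj hp f h
    calc |f c - f a| ≤ |f c - f b| + |f b - f a| := abs_sub_le _ _ _
      _ ≤ (q.cons h).length * vp G p f := by
          rw [Walk.length_cons, Nat.cast_succ]; linarith

lemma abs_le_card_mul_bvNorm (hG : G.Connected) (a0 : V) {p : ℝ} (hp : 0 < p) (f : V → ℝ)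
    (v : V) : |f v| ≤ Fintype.card V * bvNorm G p a0 f := by
  obtain ⟨w⟩ := hG.preconnected a0 v
  have hlen : ((w.toPath : G.Walk a0 v).length : ℝ) ≤ Fintype.card V :=
    mod_cast w.toPath.2.length_lt.le
  have hone : (1 : ℝ) ≤ Fintype.card V := mod_cast Fintype.card_pos_iff.mpr ⟨v⟩
  have hvp := G.vp_nonneg p f
  calc |f v| ≤ |f a0| + |f v - f a0| := by simpa using abs_add_le (f a0) (f v - f a0)
    _ ≤ |f a0| + Fintype.card V * vp G p f := by
        gcongr
        exact (G.abs_sub_le_length_mul_vp hp f _).trans (by gcongr)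
    _ ≤ Fintype.card V * bvNorm G p a0 f := by
        unfold bvNorm; nlinarith [abs_nonneg (f a0)]

lemma sum_abs_le_card_sq_mul_bvNorm (hG : G.Connected) (a0 : V) {p : ℝ} (hp : 0 < p)
    (f : V → ℝ) : ∑ v, |f v| ≤ (Fintype.card V : ℝ) ^ 2 * bvNorm G p a0 f :=
  calc ∑ v, |f v| ≤ ∑ _v : V, Fintype.card V * bvNorm G p a0 f :=
        Finset.sum_le_sum fun v _ => G.abs_le_card_mul_bvNorm hG a0 hp f v
    _ = (Fintype.card V : ℝ) ^ 2 * bvNorm G p a0 f := by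
      simp only [Finset.sum_const, Finset.card_univ, nsmul_eq_mul]; ring

lemma vp_le_of_abs_le {p : ℝ} (hp : 0 < p) (h : V → ℝ) {B : ℝ} (hB0 : 0 ≤ B)
    (hB : ∀ v, |h v| ≤ B) : vp G p h ≤ ((Fintype.card V : ℝ) ^ 2) ^ (1 / p) * (2 * B) := by
  have hterm : ∀ v w, (if G.Adj v w then |h v - h w| ^ p else 0) ≤ (2 * B) ^ p := fun v w => by
    split_ifs
    · gcongr
      linarith [abs_sub (h v) (h w), hB v, hB w]
    · positivity
  have hsum : (1 / 2) * ∑ v, ∑ w, (if G.Adj v w then |h v - h w| ^ p else 0) ≤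
      (Fintype.card V : ℝ) ^ 2 * (2 * B) ^ p :=
    calc (1 / 2) * ∑ v, ∑ w, (if G.Adj v w then |h v - h w| ^ p else 0)
        ≤ ∑ v, ∑ w, (if G.Adj v w then |h v - h w| ^ p else 0) := by
          linarith [G.sum_vp_summand_nonneg p h]
      _ ≤ ∑ _v : V, ∑ _w : V, (2 * B) ^ p :=
          Finset.sum_le_sum fun v _ => Finset.sum_le_sum fun w _ => hterm v w
      _ = (Fintype.card V : ℝ) ^ 2 * (2 * B) ^ p := by
        simp only [Finset.sum_const, Finset.card_univ, nsmul_eq_mul]; ring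
  calc vp G p h ≤ ((Fintype.card V : ℝ) ^ 2 * (2 * B) ^ p) ^ (1 / p) :=
        Real.rpow_le_rpow (mul_nonneg (by norm_num) (G.sum_vp_summand_nonneg p h)) hsum
          (by positivity)
    _ = ((Fintype.card V : ℝ) ^ 2) ^ (1 / p) * (2 * B) := by
        rw [Real.mul_rpow (by positivity) (by positivity), one_div,
          Real.rpow_rpow_inv (by positivity) hp.ne']

lemma bvNorm_le_of_abs_le {p : ℝ} (hp : 0 < p) (a0 : V) (h : V → ℝ) {B : ℝ} (hB0 : 0 ≤ B)
    (hB : ∀ v, |h v| ≤ B) :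
    bvNorm G p a0 h ≤ (2 * ((Fintype.card V : ℝ) ^ 2) ^ (1 / p) + 1) * B := by
  have := G.vp_le_of_abs_le hp h hB0 hB
  unfold bvNorm
  linarith [hB a0]

lemma one_le_card_gball (e : V) (r : ℕ) : (1 : ℝ) ≤ (gball G e r).card := by
  have he : e ∈ gball G e r := by simp [gball]
  exact_mod_cast Finset.card_pos.mpr ⟨e, he⟩

lemma card_gball_rpow_mul_le_sum_abs {α : ℝ} (hα : α ≤ 1) (f : V → ℝ) (e : V) (r : ℕ) :
    ((gball G e r).card : ℝ) ^ (α - 1) * ∑ m ∈ gball G e r, |f m| ≤ ∑ m, |f m| :=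
  calc ((gball G e r).card : ℝ) ^ (α - 1) * ∑ m ∈ gball G e r, |f m|
      ≤ 1 * ∑ m ∈ gball G e r, |f m| := by
        gcongr
        exact Real.rpow_le_one_of_one_le_of_nonpos (G.one_le_card_gball e r) (by linarith)
    _ ≤ ∑ m, |f m| := by
        rw [one_mul]
        exact Finset.sum_le_sum_of_subset_of_nonneg (Finset.subset_univ _)
          fun m _ _ => abs_nonneg _

lemma mxFr_le_add_sum_abs_sub {α : ℝ} (hα : α ≤ 1) (f g : V → ℝ) (e : V) :
    mxFr G α f e ≤ mxFr G α g e + ∑ m, |f m - g m| := by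
  have hbdd : BddAbove (Set.range fun r : ℕ =>
      ((gball G e r).card : ℝ) ^ (α - 1) * ∑ m ∈ gball G e r, |g m|) :=
    ⟨_, Set.forall_mem_range.mpr (G.card_gball_rpow_mul_le_sum_abs hα g e)⟩
  refine ciSup_le fun r => ?_
  calc ((gball G e r).card : ℝ) ^ (α - 1) * ∑ m ∈ gball G e r, |f m|
      ≤ ((gball G e r).card : ℝ) ^ (α - 1) * ∑ m ∈ gball G e r, (|g m| + |f m - g m|) := by
        gcongr with m
        linarith [abs_sub_abs_le_abs_sub (f m) (g m)]
    _ = ((gball G e r).card : ℝ) ^ (α - 1) * ∑ m ∈ gball G e r, |g m| +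
          ((gball G e r).card : ℝ) ^ (α - 1) * ∑ m ∈ gball G e r, |f m - g m| := by
        rw [Finset.sum_add_distrib, mul_add]
    _ ≤ mxFr G α g e + ∑ m, |f m - g m| :=
        add_le_add (le_ciSup hbdd r) (G.card_gball_rpow_mul_le_sum_abs hα (f - g) e r)

lemma abs_mxFr_sub_mxFr_le {α : ℝ} (hα : α ≤ 1) (f g : V → ℝ) (e : V) :
    |mxFr G α f e - mxFr G α g e| ≤ ∑ m, |f m - g m| := by
  have hfg := G.mxFr_le_add_sum_abs_sub hα f g e
  have hgf := G.mxFr_le_add_sum_abs_sub hα g f e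
  simp only [abs_sub_comm (g _)] at hgf
  exact abs_sub_le_iff.mpr ⟨by linarith, by linarith⟩

lemma mxFr_zero (α : ℝ) : mxFr G α 0 = 0 := by
  ext e
  simp [mxFr]

lemma bvNorm_mxFr_sub_mxFr_le (hG : G.Connected) (a0 : V) {α : ℝ} (hα : α ≤ 1) {p : ℝ}
    (hp : 0 < p) (f g : V → ℝ) :
    bvNorm G p a0 (mxFr G α f - mxFr G α g) ≤
      (2 * ((Fintype.card V : ℝ) ^ 2) ^ (1 / p) + 1) * (Fintype.card V : ℝ) ^ 2 *
        bvNorm G p a0 (f - g) := by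
  rw [mul_assoc]
  refine G.bvNorm_le_of_abs_le hp a0 _
    (mul_nonneg (by positivity) (G.bvNorm_nonneg p a0 _)) fun v => ?_
  exact (G.abs_mxFr_sub_mxFr_le hα f g v).trans (G.sum_abs_le_card_sq_mul_bvNorm hG a0 hp _)

end SimpleGraph

theorem fractionalMaximal_BV_bounded_and_continuous_general {V : Type*} [Fintype V]
    (G : SimpleGraph V) (hG : G.Connected) (a0 : V)
    (α : ℝ) (hα1 : α < 1) (p : ℝ) (hp : 0 < p) :
    (∃ C : ℝ, ∀ f : V → ℝ,
        vp G p (mxFr G α f) + |mxFr G α f a0| ≤ C * (vp G p f + |f a0|)) ∧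
    (∀ (f : V → ℝ) (fj : ℕ → V → ℝ),
        Filter.Tendsto (fun j => vp G p (fun x => fj j x - f x) + |fj j a0 - f a0|)
          Filter.atTop (nhds 0) →
        Filter.Tendsto
          (fun j => vp G p (fun x => mxFr G α (fj j) x - mxFr G α f x) +
            |mxFr G α (fj j) a0 - mxFr G α f a0|)
          Filter.atTop (nhds 0)) := by
  set C := (2 * ((Fintype.card V : ℝ) ^ 2) ^ (1 / p) + 1) * (Fintype.card V : ℝ) ^ 2
  have hlip : ∀ f g, bvNorm G p a0 (mxFr G α f - mxFr G α g) ≤ C * bvNorm G p a0 (f - g) :=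
    G.bvNorm_mxFr_sub_mxFr_le hG a0 hα1.le hp
  refine ⟨⟨C, fun f => ?_⟩, fun f fj hf => ?_⟩
  · simpa [bvNorm, G.mxFr_zero] using hlip f 0
  · refine squeeze_zero (fun j => G.bvNorm_nonneg p a0 _) (fun j => hlip (fj j) f) ?_
    rw [← mul_zero C]
    exact hf.const_mul C

/-- the fractional maximal operator is bounded and continuous on
`BV_p(G)` endowed with the norm `‖f‖ = Var_p f + |f a₀|`, for a connected finite
graph `G`. -/
theorem fractionalMaximal_BV_bounded_and_continuous {V : Type*} [Fintype V]
    (G : SimpleGraph V) (hG : G.Connected) (a0 : V)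
    (α : ℝ) (hα0 : 0 ≤ α) (hα1 : α < 1) (p : ℝ) (hp : 0 < p) :
    (∃ C : ℝ, ∀ f : V → ℝ,
        vp G p (mxFr G α f) + |mxFr G α f a0| ≤ C * (vp G p f + |f a0|)) ∧
    (∀ (f : V → ℝ) (fj : ℕ → V → ℝ),
        Filter.Tendsto (fun j => vp G p (fun x => fj j x - f x) + |fj j a0 - f a0|)
          Filter.atTop (nhds 0) →
        Filter.Tendsto
          (fun j => vp G p (fun x => mxFr G α (fj j) x - mxFr G α f x) +
            |mxFr G α (fj j) a0 - mxFr G α f a0|)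
          Filter.atTop (nhds 0)) :=
  fractionalMaximal_BV_bounded_and_continuous_general G hG a0 α hα1 p hp
end
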